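/- arXiv:1205.5136 — 2 statements merged into one kernel-verified Lean document; each statement's English description precedes it below -/
import Mathlib

section
/- Min–max entropy chain inequality: for random variables X, Y, Z on finite sets and ε, ε' ≥ 0 with ε + ε' < 1, H_min^{ε}(X | Z) − H_max^{ε'}(X | Y,Z) ≤ H_min^{ε+ε'}(Y | Z). -/
open scoped Classical
open Finset Real

/-- Probability of event `E` under distribution `p` on sample space `Ω`. -/
noncomputable def prE {Ω : Type*} [Fintype Ω] (p : Ω → ℝ) (E : Finset Ω) : ℝ :=
  ∑ ω ∈ E, p ω

/-- Sub-normalized joint mass P(f = a, g = b, Ω-event E); note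
`P_Y(b) · P_{XΩ|Y=b}(a) = P(X=a, Y=b, E)` under the paper's conventions. -/
noncomputable def jointE {Ω A B : Type*} [Fintype Ω] (p : Ω → ℝ) (f : Ω → A) (g : Ω → B)
    (E : Finset Ω) (a : A) (b : B) : ℝ :=
  ∑ ω ∈ E, if f ω = a ∧ g ω = b then p ω else 0

/-- Smooth conditional min-entropy
`H_min^ε(f|g) = max_{Ω : Pr[Ω] ≥ 1-ε} −log₂ ∑_b P_g(b) max_a P_{fΩ|g=b}(a)`. -/
noncomputable def HminSm {Ω A B : Type*} [Fintype Ω] [Fintype A] [Fintype B] [Nonempty A]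
    (p : Ω → ℝ) (f : Ω → A) (g : Ω → B) (ε : ℝ) : ℝ :=
  sSup { r | ∃ E : Finset Ω, 1 - ε ≤ prE p E ∧
    r = -Real.logb 2 (∑ b : B,
      Finset.univ.sup' Finset.univ_nonempty (fun a => jointE p f g E a b)) }

/-- Smooth conditional max-entropy
`H_max^ε(f|g) = min_{Ω : Pr[Ω] ≥ 1-ε} max_b log₂ |supp P_{fΩ|g=b}|`. -/
noncomputable def HmaxSm {Ω A B : Type*} [Fintype Ω] [Fintype A] [Fintype B] [Nonempty B]
    (p : Ω → ℝ) (f : Ω → A) (g : Ω → B) (ε : ℝ) : ℝ :=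
  sInf { r | ∃ E : Finset Ω, 1 - ε ≤ prE p E ∧
    r = Finset.univ.sup' Finset.univ_nonempty (fun b =>
      Real.logb 2 ((Finset.univ.filter (fun a => 0 < jointE p f g E a b)).card)) }

/-- `p` is a probability distribution. -/
def IsDist {Ω : Type*} [Fintype Ω] (p : Ω → ℝ) : Prop :=
  (∀ ω, 0 ≤ p ω) ∧ ∑ ω, p ω = 1

/-!
Take an event `E₁` attaining `H_min^ε(X|Z)` and an event `E₂` attaining `H_max^{ε'}(X|YZ)`; their
intersection has probability at least `1 - ε - ε'`. On `E₁ ∩ E₂`, for fixed `(y, z)` the mass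
`P(Y=y, Z=z)` splits over the at most `2^{H_max}` values `x` in the support of `P_{XE₂|YZ=(y,z)}`,
and each piece is at most `max_x P(X=x, Z=z, E₁)`. Summing over `z` bounds the guessing
probability of `Y` given `Z` by `2^{H_max}` times that of `X` given `Z`, which is the claim after
taking `-log₂`.
-/

noncomputable def guessProb {Ω A B : Type*} [Fintype Ω] [Fintype A] [Fintype B] [Nonempty A]
    (p : Ω → ℝ) (f : Ω → A) (g : Ω → B) (E : Finset Ω) : ℝ :=
  ∑ b : B, Finset.univ.sup' Finset.univ_nonempty (fun a => jointE p f g E a b)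

noncomputable def supportCard {Ω A B : Type*} [Fintype Ω] [Fintype A]
    (p : Ω → ℝ) (f : Ω → A) (g : Ω → B) (E : Finset Ω) (b : B) : ℕ :=
  (Finset.univ.filter (fun a => 0 < jointE p f g E a b)).card

noncomputable def maxLogSupport {Ω A B : Type*} [Fintype Ω] [Fintype A] [Fintype B] [Nonempty B]
    (p : Ω → ℝ) (f : Ω → A) (g : Ω → B) (E : Finset Ω) : ℝ :=
  Finset.univ.sup' Finset.univ_nonempty (fun b => Real.logb 2 (supportCard p f g E b))

section Optimization

variable {α : Type*} [Finite α] (P : α → Prop) (F : α → ℝ)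

lemma exists_sSup_eq_of_finite (h : ∃ a, P a) :
    ∃ a, P a ∧ sSup {r | ∃ a, P a ∧ r = F a} = F a := by
  obtain ⟨a, ha, hmax⟩ := Set.exists_max_image {a | P a} F (Set.toFinite _) h
  refine ⟨a, ha, IsGreatest.csSup_eq ⟨⟨a, ha, rfl⟩, ?_⟩⟩
  rintro r ⟨b, hb, rfl⟩
  exact hmax b hb

lemma exists_sInf_eq_of_finite (h : ∃ a, P a) :
    ∃ a, P a ∧ sInf {r | ∃ a, P a ∧ r = F a} = F a := by
  obtain ⟨a, ha, hmin⟩ := Set.exists_min_image {a | P a} F (Set.toFinite _) h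
  refine ⟨a, ha, IsLeast.csInf_eq ⟨⟨a, ha, rfl⟩, ?_⟩⟩
  rintro r ⟨b, hb, rfl⟩
  exact hmin b hb

lemma le_sSup_of_finite {a : α} (ha : P a) : F a ≤ sSup {r | ∃ a, P a ∧ r = F a} := by
  refine le_csSup (((Set.finite_range F).subset ?_).bddAbove) ⟨a, ha, rfl⟩
  rintro r ⟨b, -, rfl⟩
  exact ⟨b, rfl⟩

end Optimization

section JointMass

variable {Ω A B C : Type*} [Fintype Ω] {p : Ω → ℝ}

lemma jointE_nonneg (hp0 : ∀ ω, 0 ≤ p ω) (f : Ω → A) (g : Ω → B) (E : Finset Ω)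
    (a : A) (b : B) : 0 ≤ jointE p f g E a b :=
  Finset.sum_nonneg fun ω _ => by split <;> simp [hp0 ω]

lemma jointE_mono (hp0 : ∀ ω, 0 ≤ p ω) (f : Ω → A) (g : Ω → B) {E E' : Finset Ω}
    (hEE' : E ⊆ E') (a : A) (b : B) : jointE p f g E a b ≤ jointE p f g E' a b :=
  Finset.sum_le_sum_of_subset_of_nonneg hEE' fun ω _ _ => by split <;> simp [hp0 ω]

lemma jointE_le_of_imp (hp0 : ∀ ω, 0 ≤ p ω) (f : Ω → A) {g : Ω → B} {h : Ω → C}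
    (E : Finset Ω) (a : A) {b : B} {c : C} (hgh : ∀ ω, g ω = b → h ω = c) :
    jointE p f g E a b ≤ jointE p f h E a c :=
  Finset.sum_le_sum fun ω _ => by
    by_cases hω : f ω = a ∧ g ω = b
    · simp [hω, hgh ω hω.2]
    · rw [if_neg hω]; split <;> simp [hp0 ω]

lemma self_le_jointE (hp0 : ∀ ω, 0 ≤ p ω) (f : Ω → A) (g : Ω → B) {E : Finset Ω}
    {ω : Ω} (hω : ω ∈ E) : p ω ≤ jointE p f g E (f ω) (g ω) := by
  have h := Finset.single_le_sum (f := fun ω' => if f ω' = f ω ∧ g ω' = g ω then p ω' else 0)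
    (fun ω' _ => by split <;> simp [hp0 ω']) hω
  simpa [jointE] using h

lemma sup'_jointE_nonneg [Fintype A] [Nonempty A] (hp0 : ∀ ω, 0 ≤ p ω) (f : Ω → A) (g : Ω → B)
    (E : Finset Ω) (b : B) :
    0 ≤ Finset.univ.sup' Finset.univ_nonempty (fun a => jointE p f g E a b) :=
  Finset.le_sup'_of_le _ (Finset.mem_univ (Classical.arbitrary A)) (jointE_nonneg hp0 f g E _ b)

lemma jointE_eq_sum_jointE_pair [Fintype C] (p : Ω → ℝ) (h : Ω → C) (f : Ω → A) (g : Ω → B)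
    (E : Finset Ω) (a : A) (b : B) :
    jointE p f g E a b = ∑ c : C, jointE p h (fun ω => (f ω, g ω)) E c (a, b) := by
  unfold jointE
  rw [Finset.sum_comm]
  refine Finset.sum_congr rfl fun ω _ => ?_
  by_cases hω : f ω = a ∧ g ω = b <;> simp [hω]

lemma prE_inter_ge (hp : IsDist p) (E₁ E₂ : Finset Ω) :
    prE p E₁ + prE p E₂ - 1 ≤ prE p (E₁ ∩ E₂) := by
  have hunion : prE p (E₁ ∪ E₂) ≤ 1 := hp.2 ▸
    Finset.sum_le_sum_of_subset_of_nonneg (Finset.subset_univ _) fun ω _ _ => hp.1 ω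
  have := Finset.sum_union_inter (s₁ := E₁) (s₂ := E₂) (f := p)
  unfold prE at *
  linarith

end JointMass

section Entropies

variable {Ω A B : Type*} [Fintype Ω] [Fintype A] [Fintype B] {p : Ω → ℝ}

lemma guessProb_pos [Nonempty A] (hp0 : ∀ ω, 0 ≤ p ω) (f : Ω → A) (g : Ω → B)
    {E : Finset Ω} (hE : 0 < prE p E) : 0 < guessProb p f g E := by
  obtain ⟨ω, hωE, hω⟩ : ∃ ω ∈ E, 0 < p ω := by
    by_contra! h
    exact hE.not_ge (Finset.sum_nonpos h)
  calc 0 < p ω := hω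
    _ ≤ Finset.univ.sup' Finset.univ_nonempty (fun a => jointE p f g E a (g ω)) :=
        Finset.le_sup'_of_le _ (Finset.mem_univ _) (self_le_jointE hp0 f g hωE)
    _ ≤ guessProb p f g E :=
        Finset.single_le_sum (fun b _ => sup'_jointE_nonneg hp0 f g E b) (Finset.mem_univ (g ω))

lemma supportCard_le_rpow_maxLogSupport [Nonempty B] (p : Ω → ℝ) (f : Ω → A) (g : Ω → B)
    (E : Finset Ω) (b : B) : (supportCard p f g E b : ℝ) ≤ 2 ^ maxLogSupport p f g E := by
  rcases Nat.eq_zero_or_pos (supportCard p f g E b) with h0 | hpos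
  · rw [h0, Nat.cast_zero]
    positivity
  · calc (supportCard p f g E b : ℝ) = 2 ^ Real.logb 2 (supportCard p f g E b) :=
          (Real.rpow_logb (by norm_num) (by norm_num) (by exact_mod_cast hpos)).symm
      _ ≤ 2 ^ maxLogSupport p f g E :=
          Real.rpow_le_rpow_of_exponent_le (by norm_num)
            (Finset.le_sup' (fun b => Real.logb 2 (supportCard p f g E b)) (Finset.mem_univ b))

lemma exists_HminSm_eq [Nonempty A] (hp : IsDist p) (f : Ω → A) (g : Ω → B) {ε : ℝ}
    (hε : 0 ≤ ε) :
    ∃ E, 1 - ε ≤ prE p E ∧ HminSm p f g ε = -Real.logb 2 (guessProb p f g E) :=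
  exists_sSup_eq_of_finite _ _ ⟨Finset.univ, by rw [prE, hp.2]; linarith⟩

lemma neg_logb_guessProb_le_HminSm [Nonempty A] (f : Ω → A) (g : Ω → B) {ε : ℝ}
    {E : Finset Ω} (hE : 1 - ε ≤ prE p E) :
    -Real.logb 2 (guessProb p f g E) ≤ HminSm p f g ε :=
  le_sSup_of_finite (fun E => 1 - ε ≤ prE p E) (fun E => -Real.logb 2 (guessProb p f g E)) hE

lemma exists_HmaxSm_eq [Nonempty B] (hp : IsDist p) (f : Ω → A) (g : Ω → B) {ε : ℝ}
    (hε : 0 ≤ ε) :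
    ∃ E, 1 - ε ≤ prE p E ∧ HmaxSm p f g ε = maxLogSupport p f g E :=
  exists_sInf_eq_of_finite _ _ ⟨Finset.univ, by rw [prE, hp.2]; linarith⟩

end Entropies

section Chain

variable {Ω X Y Z : Type*} [Fintype Ω] [Fintype X] [Nonempty X]
  {p : Ω → ℝ} (fX : Ω → X) (fY : Ω → Y) (fZ : Ω → Z) (E₁ E₂ : Finset Ω)

lemma jointE_inter_le_supportCard_mul (hp0 : ∀ ω, 0 ≤ p ω) (y : Y) (z : Z) :
    jointE p fY fZ (E₁ ∩ E₂) y z ≤ supportCard p fX (fun ω => (fY ω, fZ ω)) E₂ (y, z) *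
      Finset.univ.sup' Finset.univ_nonempty (fun x => jointE p fX fZ E₁ x z) := by
  set S := Finset.univ.filter (fun x => 0 < jointE p fX (fun ω => (fY ω, fZ ω)) E₂ x (y, z))
  have hout : ∀ x ∈ Finset.univ, x ∉ S →
      jointE p fX (fun ω => (fY ω, fZ ω)) (E₁ ∩ E₂) x (y, z) = 0 := by
    intro x _ hx
    simp only [S, Finset.mem_filter, Finset.mem_univ, true_and, not_lt] at hx
    exact le_antisymm ((jointE_mono hp0 _ _ Finset.inter_subset_right x _).trans hx)
      (jointE_nonneg hp0 _ _ _ x _)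
  have hin : ∀ x ∈ S, jointE p fX (fun ω => (fY ω, fZ ω)) (E₁ ∩ E₂) x (y, z) ≤
      Finset.univ.sup' Finset.univ_nonempty (fun x => jointE p fX fZ E₁ x z) := fun x _ =>
    calc jointE p fX (fun ω => (fY ω, fZ ω)) (E₁ ∩ E₂) x (y, z)
        ≤ jointE p fX fZ (E₁ ∩ E₂) x z :=
          jointE_le_of_imp hp0 fX _ x fun ω h => congrArg Prod.snd h
      _ ≤ jointE p fX fZ E₁ x z := jointE_mono hp0 fX fZ Finset.inter_subset_left x z
      _ ≤ _ := Finset.le_sup' (fun x => jointE p fX fZ E₁ x z) (Finset.mem_univ x)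
  rw [jointE_eq_sum_jointE_pair p fX, ← Finset.sum_subset (Finset.subset_univ S) hout]
  exact (Finset.sum_le_card_nsmul S _ _ hin).trans_eq (nsmul_eq_mul _ _)

lemma guessProb_inter_le [Fintype Y] [Fintype Z] [Nonempty Y] [Nonempty Z]
    (hp0 : ∀ ω, 0 ≤ p ω) :
    guessProb p fY fZ (E₁ ∩ E₂) ≤
      2 ^ maxLogSupport p fX (fun ω => (fY ω, fZ ω)) E₂ * guessProb p fX fZ E₁ := by
  rw [guessProb, guessProb, Finset.mul_sum]
  refine Finset.sum_le_sum fun z _ => Finset.sup'_le _ _ fun y _ => ?_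
  exact (jointE_inter_le_supportCard_mul fX fY fZ E₁ E₂ hp0 y z).trans
    (mul_le_mul_of_nonneg_right (supportCard_le_rpow_maxLogSupport p fX _ E₂ (y, z))
      (sup'_jointE_nonneg hp0 fX fZ E₁ z))

lemma neg_logb_guessProb_sub_le [Fintype Y] [Fintype Z] [Nonempty Y] [Nonempty Z]
    (hp0 : ∀ ω, 0 ≤ p ω) (hE : 0 < prE p (E₁ ∩ E₂)) :
    -Real.logb 2 (guessProb p fX fZ E₁) - maxLogSupport p fX (fun ω => (fY ω, fZ ω)) E₂ ≤
      -Real.logb 2 (guessProb p fY fZ (E₁ ∩ E₂)) := by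
  have hE₁ : 0 < prE p E₁ := hE.trans_le
    (Finset.sum_le_sum_of_subset_of_nonneg Finset.inter_subset_left fun ω _ _ => hp0 ω)
  have hX := guessProb_pos hp0 fX fZ hE₁
  have hY := guessProb_pos hp0 fY fZ hE
  have hle := Real.logb_le_logb_of_le (b := 2) (by norm_num) hY
    (guessProb_inter_le fX fY fZ E₁ E₂ hp0)
  rw [Real.logb_mul (by positivity) hX.ne', Real.logb_rpow (by norm_num) (by norm_num)] at hle
  linarith

end Chain

/-- Min–max entropy chain inequality:
`H_min^ε(X | Z) − H_max^{ε'}(X | Y,Z) ≤ H_min^{ε+ε'}(Y | Z)`. -/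
theorem statement8 {Ω X Y Z : Type*} [Fintype Ω]
    [Fintype X] [Fintype Y] [Fintype Z] [Nonempty X] [Nonempty Y] [Nonempty Z]
    (p : Ω → ℝ) (hp : IsDist p)
    (fX : Ω → X) (fY : Ω → Y) (fZ : Ω → Z)
    (ε ε' : ℝ) (hε : 0 ≤ ε) (hε' : 0 ≤ ε') (hsum : ε + ε' < 1) :
    HminSm p fX fZ ε - HmaxSm p fX (fun ω => (fY ω, fZ ω)) ε' ≤
      HminSm p fY fZ (ε + ε') := by
  obtain ⟨E₁, hE₁, hmin⟩ := exists_HminSm_eq hp fX fZ hε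
  obtain ⟨E₂, hE₂, hmax⟩ := exists_HmaxSm_eq hp fX (fun ω => (fY ω, fZ ω)) hε'
  have hE : 1 - (ε + ε') ≤ prE p (E₁ ∩ E₂) := by linarith [prE_inter_ge hp E₁ E₂]
  rw [hmin, hmax]
  exact (neg_logb_guessProb_sub_le fX fY fZ E₁ E₂ hp.1 (by linarith)).trans
    (neg_logb_guessProb_le_HminSm fY fZ hE)
end

section
/- Monotonicity of smooth conditional max-entropy: for random variables X, Y, Z on finite sets and ε ∈ [0,1), H_max^{ε}(X,Y | Z) ≥ H_max^{ε}(X | Z) ≥ H_max^{ε}(X | Y,Z). -/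
open scoped Classical
open Finset Real

/-!
All three entropies are infima over the same family of events `E` with `Pr[E] ≥ 1 - ε`, so it
suffices to compare them event by event. For a fixed event, the support of `X` given `Z = z` is
the projection of the support of `(X, Y)` given `Z = z` (the mass of `X = a` is the sum of the
masses of `(a, y)`), and it contains the support of `X` given `(Y, Z) = (y, z)` (masses are
nonnegative, so a positive mass on the smaller event forces a positive mass on the larger one).
-/

noncomputable section

variable {Ω A B A' B' : Type*} [Fintype Ω]

lemma logb_two_natCast_le_of_le {m n : ℕ} (h : m ≤ n) : logb 2 m ≤ logb 2 n := by
  rcases Nat.eq_zero_or_pos m with rfl | hm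
  · rw [Nat.cast_zero, logb_zero]
    exact div_nonneg (log_natCast_nonneg n) (log_nonneg one_le_two)
  · exact logb_le_logb_of_le one_lt_two (by exact_mod_cast hm) (by exact_mod_cast h)

/-- The support of `P_{fE|g=b}`. -/
def condSupport [Fintype A] (p : Ω → ℝ) (f : Ω → A) (g : Ω → B) (E : Finset Ω) (b : B) :
    Finset A :=
  univ.filter fun a => 0 < jointE p f g E a b

def HmaxOn [Fintype A] [Fintype B] [Nonempty B] (p : Ω → ℝ) (f : Ω → A) (g : Ω → B)
    (E : Finset Ω) : ℝ :=
  univ.sup' univ_nonempty fun b => logb 2 #(condSupport p f g E b)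

lemma HmaxOn_nonneg [Fintype A] [Fintype B] [Nonempty B] (p : Ω → ℝ) (f : Ω → A) (g : Ω → B)
    (E : Finset Ω) : 0 ≤ HmaxOn p f g E := by
  refine le_sup'_of_le _ (mem_univ (Classical.arbitrary B)) ?_
  simpa using logb_two_natCast_le_of_le (Nat.zero_le #(condSupport p f g E (Classical.arbitrary B)))

lemma HmaxSm_eq_iInf [Fintype A] [Fintype B] [Nonempty B] (p : Ω → ℝ) (f : Ω → A) (g : Ω → B)
    (ε : ℝ) : HmaxSm p f g ε = ⨅ E : {E : Finset Ω // 1 - ε ≤ prE p E}, HmaxOn p f g E := by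
  rw [HmaxSm, iInf]
  congr 1
  ext r
  simp only [Set.mem_ofPred_eq, Set.mem_range, Subtype.exists, exists_prop, eq_comm]
  rfl

lemma HmaxSm_mono [Fintype A] [Fintype B] [Nonempty B] [Fintype A'] [Fintype B'] [Nonempty B']
    (p : Ω → ℝ) {f : Ω → A} {g : Ω → B} {f' : Ω → A'} {g' : Ω → B'} (ε : ℝ)
    (h : ∀ E, HmaxOn p f g E ≤ HmaxOn p f' g' E) : HmaxSm p f g ε ≤ HmaxSm p f' g' ε := by
  rw [HmaxSm_eq_iInf, HmaxSm_eq_iInf]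
  exact ciInf_mono ⟨0, by rintro _ ⟨E, rfl⟩; exact HmaxOn_nonneg p f g E⟩ fun E => h E

lemma HmaxOn_le_of_forall_exists_card_le [Fintype A] [Fintype B] [Nonempty B] [Fintype A']
    [Fintype B'] [Nonempty B'] (p : Ω → ℝ) {f : Ω → A} {g : Ω → B} {f' : Ω → A'} {g' : Ω → B'}
    (E : Finset Ω) (h : ∀ b, ∃ b', #(condSupport p f g E b) ≤ #(condSupport p f' g' E b')) :
    HmaxOn p f g E ≤ HmaxOn p f' g' E := by
  refine sup'_le _ _ fun b _ => ?_
  obtain ⟨b', hb'⟩ := h b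
  exact le_sup'_of_le _ (mem_univ b') (logb_two_natCast_le_of_le hb')

lemma jointE_eq_sum_pair [Fintype A'] (p : Ω → ℝ) (f : Ω → A) (f' : Ω → A') (g : Ω → B)
    (E : Finset Ω) (a : A) (b : B) :
    jointE p f g E a b = ∑ a', jointE p (fun ω => (f ω, f' ω)) g E (a, a') b := by
  unfold jointE
  rw [sum_comm]
  refine sum_congr rfl fun ω _ => ?_
  by_cases hf : f ω = a <;> by_cases hg : g ω = b <;> simp [hf, hg, Prod.ext_iff]

lemma condSupport_subset_image_fst [Fintype A] [Fintype A'] (p : Ω → ℝ) (f : Ω → A)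
    (f' : Ω → A') (g : Ω → B) (E : Finset Ω) (b : B) :
    condSupport p f g E b ⊆ (condSupport p (fun ω => (f ω, f' ω)) g E b).image Prod.fst := by
  intro a ha
  simp only [condSupport, mem_filter, mem_univ, true_and, jointE_eq_sum_pair p f f'] at ha
  obtain ⟨a', -, ha'⟩ := exists_lt_of_sum_lt (by simpa using ha : ∑ _ : A', (0 : ℝ) < _)
  exact mem_image.mpr ⟨(a, a'), by simpa [condSupport] using ha', rfl⟩

lemma jointE_pair_le (p : Ω → ℝ) (hp : ∀ ω, 0 ≤ p ω) (f : Ω → A) (g' : Ω → B') (g : Ω → B)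
    (E : Finset Ω) (a : A) (b' : B') (b : B) :
    jointE p f (fun ω => (g' ω, g ω)) E a (b', b) ≤ jointE p f g E a b := by
  refine sum_le_sum fun ω _ => ?_
  by_cases hfg : f ω = a ∧ g ω = b
  · split_ifs <;> simp_all
  · rw [if_neg (by simp only [Prod.ext_iff]; tauto), if_neg hfg]

lemma condSupport_pair_subset [Fintype A] (p : Ω → ℝ) (hp : ∀ ω, 0 ≤ p ω) (f : Ω → A)
    (g' : Ω → B') (g : Ω → B) (E : Finset Ω) (b' : B') (b : B) :
    condSupport p f (fun ω => (g' ω, g ω)) E (b', b) ⊆ condSupport p f g E b :=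
  monotone_filter_right _ fun a _ ha => ha.trans_le (jointE_pair_le p hp f g' g E a b' b)

end

theorem statement11_general {Ω X Y Z : Type*} [Fintype Ω]
    [Fintype X] [Fintype Y] [Fintype Z] [Nonempty Y] [Nonempty Z]
    (p : Ω → ℝ) (hp : IsDist p)
    (fX : Ω → X) (fY : Ω → Y) (fZ : Ω → Z)
    (ε : ℝ) :
    HmaxSm p (fun ω => (fX ω, fY ω)) fZ ε ≥ HmaxSm p fX fZ ε ∧
      HmaxSm p fX fZ ε ≥ HmaxSm p fX (fun ω => (fY ω, fZ ω)) ε := by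
  refine ⟨HmaxSm_mono p ε fun E => HmaxOn_le_of_forall_exists_card_le p E fun z => ⟨z, ?_⟩,
    HmaxSm_mono p ε fun E => HmaxOn_le_of_forall_exists_card_le p E fun yz => ⟨yz.2, ?_⟩⟩
  · exact (card_le_card (condSupport_subset_image_fst p fX fY fZ E z)).trans card_image_le
  · exact card_le_card (condSupport_pair_subset p hp.1 fX fY fZ E yz.1 yz.2)

/-- Monotonicity of smooth conditional max-entropy:
`H_max^ε(X,Y | Z) ≥ H_max^ε(X | Z) ≥ H_max^ε(X | Y,Z)`. -/
theorem statement11 {Ω X Y Z : Type*} [Fintype Ω]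
    [Fintype X] [Fintype Y] [Fintype Z] [Nonempty X] [Nonempty Y] [Nonempty Z]
    (p : Ω → ℝ) (hp : IsDist p)
    (fX : Ω → X) (fY : Ω → Y) (fZ : Ω → Z)
    (ε : ℝ) (hε0 : 0 ≤ ε) (hε1 : ε < 1) :
    HmaxSm p (fun ω => (fX ω, fY ω)) fZ ε ≥ HmaxSm p fX fZ ε ∧
      HmaxSm p fX fZ ε ≥ HmaxSm p fX (fun ω => (fY ω, fZ ω)) ε :=
  statement11_general p hp fX fY fZ ε
end
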